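/- arXiv:1106.5967 — 4 statements merged into one kernel-verified Lean document; each statement's English description precedes it below -/
import Mathlib

section
/- With the notation of the previous statement, the map F: [0,∞] × C_{β'} → C_{β'} (extended by F(∞, U) = 1) is continuous and exhibits a contraction of the cocycle space C_{β'}: F(0, U) = U and F(∞, U) = 1 for all U. Hence the space of cocycles of an E₀-semigroup of the form β ⊗ id on B(H ⊗ L²(ℝ₊)) is contractible. -/
/-!
The map `a ↦ P_λ + S_λ a S_λ*`, with `P_λ = 1 - S_λ S_λ*`, is a unital `*`-endomorphism of
`B(K)`; it commutes with every `β'_t` because `β'_t` fixes `S_λ`, so it carries unitaries to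
unitaries and cocycles to cocycles. For fixed `ξ`, the vector `(P_λ + S_λ v S_λ*) ξ` is jointly
continuous in `(λ, v)` for finite `λ` since `λ ↦ S_λ* ξ` is continuous (`S_m* = S_l* S_{m-l}*` and
`‖S_d* ξ - ξ‖ ≤ ‖ξ - S_d ξ‖`) and all operators involved are contractions; near `λ = ∞` it is
within `2 ‖S_λ S_λ* ξ‖ → 0` of `ξ`, uniformly in `v`. Reparametrising `[0, ∞]` by `[0, 1]` turns
`F` into a homotopy from the identity of `C_{β'}` to the constant cocycle `1`.
-/
open scoped NNReal ENNReal ComplexInnerProductSpace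

/-- An E₀-semigroup on `B(K)`. -/
structure E0Semigroup (K : Type*) [NormedAddCommGroup K] [InnerProductSpace ℂ K]
    [CompleteSpace K] where
  toFun : ℝ≥0 → (K →L[ℂ] K) →⋆ₐ[ℂ] (K →L[ℂ] K)
  map_zero' : toFun 0 = StarAlgHom.id ℂ (K →L[ℂ] K)
  semigroup' : ∀ t s, toFun (t + s) = (toFun t).comp (toFun s)
  weakly_continuous' : ∀ (a : K →L[ℂ] K) (ξ η : K),
    Continuous fun t => ⟪ξ, toFun t a η⟫

open Filter Topology

section Topology

variable {X : Type*} [TopologicalSpace X]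

theorem Continuous.clm_apply_of_norm_le {𝕜 E F : Type*} [NontriviallyNormedField 𝕜]
    [SeminormedAddCommGroup E] [NormedSpace 𝕜 E] [SeminormedAddCommGroup F] [NormedSpace 𝕜 F]
    {T : X → E →L[𝕜] F} {f : X → E} (C : ℝ≥0) (hC : ∀ x, ‖T x‖ ≤ C)
    (hT : ∀ v, Continuous fun x => T x v) (hf : Continuous f) :
    Continuous fun x => T x (f x) :=
  (continuous_prod_of_continuous_lipschitzWith (fun p : E × X => T p.2 p.1) C hT
    fun x => (T x).lipschitzWith_of_opNorm_le (hC x)).comp (hf.prodMk continuous_id)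

theorem ENNReal.continuous_prod_of_tendsto_top_uniformly {E : Type*} [PseudoMetricSpace E]
    {f : ℝ≥0∞ × X → E} {z : E} {b : ℝ≥0 → ℝ}
    (hcoe : Continuous fun p : ℝ≥0 × X => f (p.1, p.2)) (htop : ∀ x, f (⊤, x) = z)
    (hb : Tendsto b atTop (𝓝 0)) (hbound : ∀ (l : ℝ≥0) x, dist (f (l, x)) z ≤ b l) :
    Continuous f := by
  refine continuous_iff_continuousAt.2 fun ⟨l, x⟩ => ?_
  induction l using ENNReal.recTopCoe with
  | top =>
    rw [ContinuousAt, htop, Metric.tendsto_nhds]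
    intro ε hε
    obtain ⟨N, hN⟩ := eventually_atTop.1 (hb.eventually (gt_mem_nhds hε))
    filter_upwards [prod_mem_nhds (Ioi_mem_nhds (ENNReal.coe_lt_top (r := N))) univ_mem]
    rintro ⟨m, y⟩ ⟨hm, -⟩
    induction m using ENNReal.recTopCoe with
    | top => simpa [htop] using hε
    | coe m => exact (hbound m y).trans_lt (hN m (ENNReal.coe_lt_coe.1 hm).le)
  | coe l =>
    exact ((ENNReal.isOpenEmbedding_coe.prodMap .id).continuousAt_iff (x := (l, x))).1
      hcoe.continuousAt

theorem contractibleSpace_of_ennreal_homotopy (F : C(ℝ≥0∞ × X, X)) (x₀ : X)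
    (h0 : ∀ x, F (0, x) = x) (htop : ∀ x, F (⊤, x) = x₀) : ContractibleSpace X := by
  let ψ : unitInterval ≃o ℝ≥0∞ := ENNReal.orderIsoUnitIntervalBirational.symm
  refine contractible_iff_id_nullhomotopic X |>.2 ⟨x₀, ⟨
    { toFun := fun q => F (ψ q.1, q.2)
      continuous_toFun := F.continuous.comp
        ((ψ.toHomeomorph.continuous.comp continuous_fst).prodMk continuous_snd)
      map_zero_left := fun x => by simpa [show ψ 0 = 0 from ψ.map_bot] using h0 x
      map_one_left := fun x => by simpa [show ψ 1 = ⊤ from ψ.map_top] using htop x }⟩⟩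

end Topology

section IsometryConj

variable {A : Type*} [Ring A] [StarRing A]

/-- For `s = S_λ` this is the paper's `a ↦ P_λ + S_λ a S_λ*`. -/
def isometryConj (s : A) (hs : star s * s = 1) : A →⋆* A where
  toFun a := (1 - s * star s) + s * a * star s
  map_one' := by simp
  map_mul' a b := by
    have hs' : ∀ x : A, star s * (s * x) = x := fun x => by rw [← mul_assoc, hs, one_mul]
    simp only [sub_mul, mul_sub, add_mul, mul_add, one_mul, mul_one, mul_assoc, hs']
    abel
  map_star' a := by simp [mul_assoc]

theorem isometryConj_apply (s : A) (hs : star s * s = 1) (a : A) :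
    isometryConj s hs a = (1 - s * star s) + s * a * star s :=
  rfl

theorem map_isometryConj {F : Type*} [FunLike F A A] [RingHomClass F A A] [StarHomClass F A A]
    (φ : F) {s : A} (hs : star s * s = 1) (hφ : φ s = s) (a : A) :
    φ (isometryConj s hs a) = isometryConj s hs (φ a) := by
  simp [isometryConj_apply, map_star, hφ]

end IsometryConj

section Isometries

variable {K : Type*} [NormedAddCommGroup K] [InnerProductSpace ℂ K] [CompleteSpace K]

theorem norm_apply_of_star_mul_self_eq_one {T : K →L[ℂ] K} (hT : star T * T = 1) (ξ : K) :
    ‖T ξ‖ = ‖ξ‖ :=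
  T.norm_map_iff_adjoint_comp_self.2 hT ξ

theorem norm_le_one_of_star_mul_self_eq_one {T : K →L[ℂ] K} (hT : star T * T = 1) : ‖T‖ ≤ 1 :=
  T.opNorm_le_bound zero_le_one fun ξ => by rw [norm_apply_of_star_mul_self_eq_one hT, one_mul]

theorem norm_star_apply_le_of_star_mul_self_eq_one {T : K →L[ℂ] K} (hT : star T * T = 1)
    (ξ : K) : ‖star T ξ‖ ≤ ‖ξ‖ := by
  have hnorm : ‖star T‖ ≤ 1 := (norm_star T).trans_le (norm_le_one_of_star_mul_self_eq_one hT)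
  simpa using (star T).le_of_opNorm_le hnorm ξ

theorem norm_star_apply_sub_le {T : K →L[ℂ] K} (hT : star T * T = 1) (ξ : K) :
    ‖star T ξ - ξ‖ ≤ ‖ξ - T ξ‖ := by
  have : star T ξ - ξ = star T (ξ - T ξ) := by
    rw [map_sub, ← mul_apply_eq_comp, hT, one_apply_eq_self]
  exact this ▸ norm_star_apply_le_of_star_mul_self_eq_one hT _

theorem norm_isometryConj_apply_sub_le {T : K →L[ℂ] K} (hT : star T * T = 1)
    (v : unitary (K →L[ℂ] K)) (ξ : K) :
    ‖isometryConj T hT v ξ - ξ‖ ≤ 2 * ‖(T * star T) ξ‖ := by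
  set η := star T ξ
  have hv : ‖(v : K →L[ℂ] K) η‖ = ‖η‖ :=
    ContinuousLinearMap.norm_map_of_mem_unitary v.2 η
  calc ‖isometryConj T hT v ξ - ξ‖ = ‖T ((v : K →L[ℂ] K) η - η)‖ := by
        simp only [isometryConj_apply, add_apply, sub_apply, one_apply_eq_self,
          mul_apply_eq_comp, map_sub, η]
        congr 1; abel
    _ ≤ ‖(v : K →L[ℂ] K) η‖ + ‖η‖ := by
        rw [norm_apply_of_star_mul_self_eq_one hT]; exact norm_sub_le _ _
    _ = 2 * ‖(T * star T) ξ‖ := by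
        rw [hv, mul_apply_eq_comp, norm_apply_of_star_mul_self_eq_one hT]; ring

end Isometries

section IsometrySemigroup

variable {K : Type*} [NormedAddCommGroup K] [InnerProductSpace ℂ K] [CompleteSpace K]
  {S : ℝ≥0 → K →L[ℂ] K}

theorem norm_star_apply_sub_star_apply_le (hSsemigroup : ∀ l m, S (l + m) = S l * S m)
    (hSisometry : ∀ l, star (S l) * S l = 1) {l m : ℝ≥0} (hlm : l ≤ m) (ξ : K) :
    ‖star (S m) ξ - star (S l) ξ‖ ≤ ‖ξ - S (m - l) ξ‖ := by
  have hfactor : star (S m) = star (S l) * star (S (m - l)) := by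
    rw [← star_mul, ← hSsemigroup, tsub_add_cancel_of_le hlm]
  calc ‖star (S m) ξ - star (S l) ξ‖ = ‖star (S l) (star (S (m - l)) ξ - ξ)‖ := by
        rw [hfactor, mul_apply_eq_comp, map_sub]
    _ ≤ ‖star (S (m - l)) ξ - ξ‖ := norm_star_apply_le_of_star_mul_self_eq_one (hSisometry l) _
    _ ≤ ‖ξ - S (m - l) ξ‖ := norm_star_apply_sub_le (hSisometry _) ξ

theorem continuous_star_apply (hS0 : S 0 = 1) (hSsemigroup : ∀ l m, S (l + m) = S l * S m)
    (hSisometry : ∀ l, star (S l) * S l = 1) (hScont : ∀ ξ, Continuous fun l => S l ξ) (ξ : K) :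
    Continuous fun l => star (S l) ξ := by
  refine continuous_iff_continuousAt.2 fun l₀ => tendsto_iff_norm_sub_tendsto_zero.2 ?_
  have hmodulus : Continuous fun l => ‖ξ - S (l - l₀) ξ‖ + ‖ξ - S (l₀ - l) ξ‖ := by
    fun_prop
  refine squeeze_zero (fun _ => norm_nonneg _) (fun l => ?_)
    (by simpa [hS0] using hmodulus.tendsto l₀)
  rcases le_total l l₀ with h | h
  · rw [norm_sub_rev, tsub_eq_zero_of_le h, hS0, one_apply_eq_self, sub_self, norm_zero, zero_add]
    exact norm_star_apply_sub_star_apply_le hSsemigroup hSisometry h ξ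
  · rw [tsub_eq_zero_of_le h, hS0, one_apply_eq_self, sub_self, norm_zero, add_zero]
    exact norm_star_apply_sub_star_apply_le hSsemigroup hSisometry h ξ

end IsometrySemigroup

section Contraction

variable {K : Type*} [NormedAddCommGroup K] [InnerProductSpace ℂ K] [CompleteSpace K]

theorem continuous_unitary_iff_of_eq_induced [tU : TopologicalSpace (unitary (K →L[ℂ] K))]
    (htU : tU = TopologicalSpace.induced
      (fun (u : unitary (K →L[ℂ] K)) (x : K) => (u : K →L[ℂ] K) x) Pi.topologicalSpace)
    {X : Type*} [TopologicalSpace X] {g : X → unitary (K →L[ℂ] K)} :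
    Continuous g ↔ ∀ ξ, Continuous fun x => (g x : K →L[ℂ] K) ξ := by
  subst htU
  rw [continuous_induced_rng, continuous_pi_iff]
  rfl

/-- The paper's `F(λ, ·)`, acting on a single unitary rather than on a cocycle. -/
noncomputable def isometryContraction (S : ℝ≥0 → K →L[ℂ] K) (hS : ∀ l, star (S l) * S l = 1) :
    ℝ≥0∞ → unitary (K →L[ℂ] K) → unitary (K →L[ℂ] K) :=
  ENNReal.recTopCoe (fun _ => 1) fun l => Unitary.map (isometryConj (S l) (hS l))

variable {S : ℝ≥0 → K →L[ℂ] K} (hSisometry : ∀ l, star (S l) * S l = 1)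

theorem isometryContraction_zero (hS0 : S 0 = 1) (v : unitary (K →L[ℂ] K)) :
    isometryContraction S hSisometry 0 v = v := by
  ext1
  change isometryConj (S 0) _ v = v
  simp [isometryConj_apply, hS0]

theorem continuous_isometryContraction [tU : TopologicalSpace (unitary (K →L[ℂ] K))]
    (htU : tU = TopologicalSpace.induced
      (fun (u : unitary (K →L[ℂ] K)) (x : K) => (u : K →L[ℂ] K) x) Pi.topologicalSpace)
    (hS0 : S 0 = 1) (hSsemigroup : ∀ l m, S (l + m) = S l * S m)
    (hScont : ∀ ξ, Continuous fun l => S l ξ)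
    (hSshift : ∀ ξ, Tendsto (fun l => (S l * star (S l)) ξ) atTop (𝓝 0)) :
    Continuous fun p : ℝ≥0∞ × unitary (K →L[ℂ] K) => isometryContraction S hSisometry p.1 p.2 := by
  have happly := (continuous_unitary_iff_of_eq_induced htU).1 continuous_id
  have hstar := continuous_star_apply hS0 hSsemigroup hSisometry hScont
  have hSnorm (p : ℝ≥0 × unitary (K →L[ℂ] K)) : ‖S p.1‖ ≤ (1 : ℝ≥0) :=
    norm_le_one_of_star_mul_self_eq_one (hSisometry p.1)
  have hvnorm (p : ℝ≥0 × unitary (K →L[ℂ] K)) : ‖(p.2 : K →L[ℂ] K)‖ ≤ (1 : ℝ≥0) :=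
    norm_le_one_of_star_mul_self_eq_one (Unitary.star_mul_self_of_mem p.2.2)
  refine (continuous_unitary_iff_of_eq_induced htU).2 fun ξ =>
    ENNReal.continuous_prod_of_tendsto_top_uniformly (z := ξ) ?_ (fun _ => rfl)
      (by simpa using (hSshift ξ).norm.const_mul 2)
      fun l v => (dist_eq_norm _ _).trans_le (norm_isometryConj_apply_sub_le (hSisometry l) v ξ)
  change Continuous fun p : ℝ≥0 × unitary (K →L[ℂ] K) => isometryConj (S p.1) _ p.2 ξ
  simp only [isometryConj_apply, add_apply, sub_apply, one_apply_eq_self, mul_apply_eq_comp]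
  have hSapply (η : K) : Continuous fun p : ℝ≥0 × unitary (K →L[ℂ] K) => S p.1 η :=
    (hScont η).comp continuous_fst
  have hstar_fst : Continuous fun p : ℝ≥0 × unitary (K →L[ℂ] K) => star (S p.1) ξ :=
    (hstar ξ).comp continuous_fst
  refine (continuous_const.sub ?_).add ?_
  · exact .clm_apply_of_norm_le 1 hSnorm hSapply hstar_fst
  · exact .clm_apply_of_norm_le 1 hSnorm hSapply
      (.clm_apply_of_norm_le 1 hvnorm (fun η => (happly η).comp continuous_snd) hstar_fst)

end Contraction

section Cocycles

variable {K : Type*} [NormedAddCommGroup K] [InnerProductSpace ℂ K] [CompleteSpace K]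

def IsCocycle (β' : E0Semigroup K) (f : ℝ≥0 → unitary (K →L[ℂ] K)) : Prop :=
  f 0 = 1 ∧ ∀ t s, ((f (t + s) : K →L[ℂ] K) = (f t : K →L[ℂ] K) * β'.toFun t (f s : K →L[ℂ] K))

variable {β' : E0Semigroup K}

theorem isCocycle_one : IsCocycle β' 1 :=
  ⟨rfl, fun t s => by simp⟩

theorem IsCocycle.isometryContraction {S : ℝ≥0 → K →L[ℂ] K}
    (hSisometry : ∀ l, star (S l) * S l = 1) (hSfixed : ∀ t l, β'.toFun t (S l) = S l)
    {f : ℝ≥0 → unitary (K →L[ℂ] K)} (hf : IsCocycle β' f) (l : ℝ≥0∞) :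
    IsCocycle β' fun t => isometryContraction S hSisometry l (f t) := by
  induction l using ENNReal.recTopCoe with
  | top => exact isCocycle_one
  | coe l =>
    refine ⟨(congrArg _ hf.1).trans (map_one (Unitary.map _)), fun t s => ?_⟩
    change isometryConj (S l) _ (f (t + s) : K →L[ℂ] K) =
      isometryConj (S l) _ (f t : K →L[ℂ] K) * β'.toFun t (isometryConj (S l) _ (f s))
    rw [map_isometryConj _ _ (hSfixed t l), hf.2, map_mul]

end Cocycles

theorem stmt9_general {K : Type*} [NormedAddCommGroup K] [InnerProductSpace ℂ K] [CompleteSpace K]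
    (β' : E0Semigroup K) (S : ℝ≥0 → K →L[ℂ] K)
    (hS0 : S 0 = 1) (hSsemigroup : ∀ l m : ℝ≥0, S (l + m) = S l * S m)
    (hSisometry : ∀ l : ℝ≥0, star (S l) * S l = 1)
    (hScont : ∀ ξ : K, Continuous fun l => S l ξ)
    (hSfixed : ∀ (t l : ℝ≥0), β'.toFun t (S l) = S l)
    (hSshift : ∀ ξ : K, Filter.Tendsto (fun l => (S l * star (S l)) ξ) Filter.atTop (nhds 0))
    -- the strong operator topology on `U(K)`:
    [tU : TopologicalSpace (unitary (K →L[ℂ] K))]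
    (htU : tU = TopologicalSpace.induced
      (fun (u : unitary (K →L[ℂ] K)) (x : K) => (u : K →L[ℂ] K) x) Pi.topologicalSpace)
    -- the space `C_{β'}` of `β'`-cocycles:
    (Cβ' : Set C(ℝ≥0, unitary (K →L[ℂ] K)))
    (hCβ' : Cβ' = {f : C(ℝ≥0, unitary (K →L[ℂ] K)) | f 0 = 1 ∧
        ∀ t s, ((f (t + s) : K →L[ℂ] K) =
          (f t : K →L[ℂ] K) * β'.toFun t (f s : K →L[ℂ] K))}) :
    (∃ F : C(ℝ≥0∞ × Cβ', Cβ'),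
        (∀ u : Cβ', F (0, u) = u) ∧
        (∀ u : Cβ', ((F (⊤, u) : Cβ') : C(ℝ≥0, unitary (K →L[ℂ] K))) = 1) ∧
        (∀ (l : ℝ≥0) (u : Cβ') (t : ℝ≥0),
          (((F ((l : ℝ≥0∞), u) : Cβ') : C(ℝ≥0, unitary (K →L[ℂ] K))) t : K →L[ℂ] K) =
            (1 - S l * star (S l)) +
              S l * (((u : C(ℝ≥0, unitary (K →L[ℂ] K))) t : K →L[ℂ] K)) * star (S l))) ∧
      ContractibleSpace Cβ' := by
  have hC (f) : f ∈ Cβ' ↔ IsCocycle β' f := hCβ' ▸ Iff.rfl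
  have hΦ := continuous_isometryContraction hSisometry htU hS0 hSsemigroup hScont hSshift
  let G : C((ℝ≥0∞ × Cβ') × ℝ≥0, unitary (K →L[ℂ] K)) :=
    ⟨fun p => isometryContraction S hSisometry p.1.1 ((p.1.2 : C(ℝ≥0, _)) p.2), by fun_prop⟩
  let F : C(ℝ≥0∞ × Cβ', Cβ') :=
    ⟨fun p => ⟨G.curry p, (hC _).2 (((hC _).1 p.2.2).isometryContraction hSisometry hSfixed p.1)⟩,
      G.curry.continuous.subtype_mk _⟩
  have hF0 (u) : F (0, u) = u := by
    ext t : 3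
    exact congrArg Subtype.val (isometryContraction_zero hSisometry hS0 _)
  have hFtop (u) : F (⊤, u) = ⟨1, (hC 1).2 isCocycle_one⟩ := rfl
  exact ⟨⟨F, hF0, fun u => congrArg Subtype.val (hFtop u), fun l u t => rfl⟩,
    contractibleSpace_of_ennreal_homotopy F _ hF0 hFtop⟩

/-- With the notation of Statement 8 (an E₀-semigroup `β'` absorbing a
strongly continuous semigroup of isometries `S`, e.g. `β' = β ⊗ id` on `B(H ⊗ L²(ℝ₊))`
with `S_λ = 1 ⊗ V_λ` the right shift, for which `S_λ S_λ* → 0` strongly), the map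
`F : [0,∞] × C_{β'} → C_{β'}`, `F(λ,U)_t = P_λ + S_λ U_t S_λ*`, extended by
`F(∞,U) = 1`, is continuous, satisfies `F(0,U) = U` and `F(∞,U) = 1`, and exhibits a
contraction of the cocycle space `C_{β'}`; hence `C_{β'}` is contractible. -/
theorem stmt9 {K : Type*} [NormedAddCommGroup K] [InnerProductSpace ℂ K] [CompleteSpace K]
    [TopologicalSpace.SeparableSpace K]
    (β' : E0Semigroup K) (S : ℝ≥0 → K →L[ℂ] K)
    (hS0 : S 0 = 1) (hSsemigroup : ∀ l m : ℝ≥0, S (l + m) = S l * S m)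
    (hSisometry : ∀ l : ℝ≥0, star (S l) * S l = 1)
    (hScont : ∀ ξ : K, Continuous fun l => S l ξ)
    (hSfixed : ∀ (t l : ℝ≥0), β'.toFun t (S l) = S l)
    (hSshift : ∀ ξ : K, Filter.Tendsto (fun l => (S l * star (S l)) ξ) Filter.atTop (nhds 0))
    -- the strong operator topology on `U(K)`:
    [tU : TopologicalSpace (unitary (K →L[ℂ] K))]
    (htU : tU = TopologicalSpace.induced
      (fun (u : unitary (K →L[ℂ] K)) (x : K) => (u : K →L[ℂ] K) x) Pi.topologicalSpace)
    -- the space `C_{β'}` of `β'`-cocycles: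
    (Cβ' : Set C(ℝ≥0, unitary (K →L[ℂ] K)))
    (hCβ' : Cβ' = {f : C(ℝ≥0, unitary (K →L[ℂ] K)) | f 0 = 1 ∧
        ∀ t s, ((f (t + s) : K →L[ℂ] K) =
          (f t : K →L[ℂ] K) * β'.toFun t (f s : K →L[ℂ] K))}) :
    (∃ F : C(ℝ≥0∞ × Cβ', Cβ'),
        (∀ u : Cβ', F (0, u) = u) ∧
        (∀ u : Cβ', ((F (⊤, u) : Cβ') : C(ℝ≥0, unitary (K →L[ℂ] K))) = 1) ∧
        (∀ (l : ℝ≥0) (u : Cβ') (t : ℝ≥0),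
          (((F ((l : ℝ≥0∞), u) : Cβ') : C(ℝ≥0, unitary (K →L[ℂ] K))) t : K →L[ℂ] K) =
            (1 - S l * star (S l)) +
              S l * (((u : C(ℝ≥0, unitary (K →L[ℂ] K))) t : K →L[ℂ] K)) * star (S l))) ∧
      ContractibleSpace Cβ' :=
  stmt9_general β' S hS0 hSsemigroup hSisometry hScont hSfixed hSshift (tU := tU) htU Cβ' hCβ'
end

section
/- Let N be an open interval containing 0 and σ: N × N → ℝ a smooth (C^∞) local additive multiplier. Then there exist an open interval N' ∋ 0 with N' + N' ⊆ N and a continuous function φ: N → ℝ with φ(0) = 0 such that σ(u,v) = φ(u+v) − φ(u) − φ(v) for all u, v ∈ N'. In other words, every smooth local additive multiplier is a coboundary. -/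
/-- A local additive multiplier on `N`. -/
def IsLocalAddMultiplier (N : Set ℝ) (σ : ℝ → ℝ → ℝ) : Prop :=
  (∀ t ∈ N, σ t 0 = 0 ∧ σ 0 t = 0) ∧
    ∀ t ∈ N, ∀ s ∈ N, ∀ r ∈ N, t + s ∈ N → s + r ∈ N → t + s + r ∈ N →
      σ t s + σ (t + s) r = σ s r + σ t (s + r)

open MeasureTheory intervalIntegral in
/-- Every smooth (`C^∞`) local additive multiplier `σ` on an open
interval `N ∋ 0` is a coboundary on a smaller interval: there are an open interval
`N' ∋ 0` with `N' + N' ⊆ N` and a continuous `φ : N → ℝ` with `φ(0) = 0` such that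
`σ(u,v) = φ(u+v) − φ(u) − φ(v)` for all `u, v ∈ N'`. -/
theorem stmt11 (N : Set ℝ) (hN : ∃ a b : ℝ, a < 0 ∧ 0 < b ∧ N = Set.Ioo a b)
    (σ : ℝ → ℝ → ℝ) (hσ : IsLocalAddMultiplier N σ)
    (hsmooth : ContDiffOn ℝ (⊤ : ℕ∞) (fun p : ℝ × ℝ => σ p.1 p.2) (N ×ˢ N)) :
    ∃ N' : Set ℝ, (∃ a b : ℝ, a < 0 ∧ 0 < b ∧ N' = Set.Ioo a b) ∧
      (∀ x ∈ N', ∀ y ∈ N', x + y ∈ N) ∧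
      ∃ φ : ℝ → ℝ, ContinuousOn φ N ∧ φ 0 = 0 ∧
        ∀ u ∈ N', ∀ v ∈ N', σ u v = φ (u + v) - φ u - φ v := by
  obtain ⟨a, b, ha, hb, rfl⟩ := hN
  set N : Set ℝ := Set.Ioo a b with hNdef
  set F : ℝ × ℝ → ℝ := fun p => σ p.1 p.2 with hF
  have hNopen : IsOpen N := isOpen_Ioo
  have h0N : (0 : ℝ) ∈ N := ⟨ha, hb⟩
  have hopen2 : IsOpen (N ×ˢ N) := hNopen.prod hNopen
  -- differentiability of F at points of N ×ˢ N
  have hdiff : ∀ p ∈ N ×ˢ N, HasFDerivAt F (fderiv ℝ F p) p := by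
    intro p hp
    have := (hsmooth.differentiableOn (by simp)).differentiableAt (hopen2.mem_nhds hp)
    exact this.hasFDerivAt
  -- partial derivative in the second variable
  have hD : ∀ x ∈ N, ∀ y ∈ N, HasDerivAt (fun s => σ x s) (fderiv ℝ F (x, y) (0, 1)) y := by
    intro x hx y hy
    have h1 : HasDerivAt (fun s : ℝ => ((x, s) : ℝ × ℝ)) ((0 : ℝ), (1 : ℝ)) y :=
      (hasDerivAt_const y x).prodMk (hasDerivAt_id y)
    exact (hdiff (x, y) ⟨hx, hy⟩).comp_hasDerivAt y h1
  set g : ℝ → ℝ := fun x => fderiv ℝ F (x, 0) (0, 1) with hg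
  have hgcont : ContinuousOn g N := by
    have h1 := hsmooth.continuousOn_fderiv_of_isOpen hopen2 (by simp)
    have h2 : ContinuousOn (fun x : ℝ => fderiv ℝ F (x, 0)) N :=
      h1.comp (continuous_id.prodMk continuous_const).continuousOn
        (fun x hx => ⟨hx, h0N⟩)
    exact (ContinuousLinearMap.apply ℝ ℝ ((0 : ℝ), (1 : ℝ))).continuous.comp_continuousOn h2
  -- the smaller interval
  refine ⟨Set.Ioo (a / 2) (b / 2), ⟨a / 2, b / 2, by linarith, by linarith, rfl⟩, ?_, ?_⟩
  · intro x hx y hy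
    exact ⟨by obtain ⟨h1, _⟩ := hx; obtain ⟨h2, _⟩ := hy; linarith,
      by obtain ⟨_, h1⟩ := hx; obtain ⟨_, h2⟩ := hy; linarith⟩
  set N' : Set ℝ := Set.Ioo (a / 2) (b / 2) with hN'def
  have hN'sub : N' ⊆ N := Set.Ioo_subset_Ioo (by linarith) (by linarith)
  have hN'add : ∀ x ∈ N', ∀ y ∈ N', x + y ∈ N := by
    intro x hx y hy
    exact ⟨by obtain ⟨h1, _⟩ := hx; obtain ⟨h2, _⟩ := hy; linarith,
      by obtain ⟨_, h1⟩ := hx; obtain ⟨_, h2⟩ := hy; linarith⟩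
  have h0N' : (0 : ℝ) ∈ N' := ⟨by linarith, by linarith⟩
  -- key derivative identity
  have key : ∀ t ∈ N', ∀ s ∈ N', HasDerivAt (fun y => σ t y) (g (t + s) - g s) s := by
    intro t ht s hs
    have htN := hN'sub ht
    have hsN := hN'sub hs
    have hts : t + s ∈ N := hN'add t ht s hs
    have hev : (fun r => σ (t + s) r) =ᶠ[nhds 0] (fun r => σ s r + σ t (s + r) - σ t s) := by
      have e1 : ∀ᶠ r in nhds (0 : ℝ), r ∈ N := hNopen.mem_nhds h0N
      have e2 : ∀ᶠ r in nhds (0 : ℝ), s + r ∈ N :=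
        (hNopen.preimage (continuous_const.add continuous_id)).mem_nhds (by simpa using hsN)
      have e3 : ∀ᶠ r in nhds (0 : ℝ), t + s + r ∈ N :=
        (hNopen.preimage (continuous_const.add continuous_id)).mem_nhds (by simpa using hts)
      filter_upwards [e1, e2, e3] with r hr1 hr2 hr3
      have := hσ.2 t htN s hsN r hr1 hts hr2 hr3
      linarith
    have hA : HasDerivAt (fun r => σ (t + s) r) (g (t + s)) 0 := hD (t + s) hts 0 h0N
    have hB1 : HasDerivAt (fun r => σ s r) (g s) 0 := hD s hsN 0 h0N
    have hDts : HasDerivAt (fun y => σ t y) (fderiv ℝ F (t, s) (0, 1)) s := hD t htN s hsN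
    have hadd : HasDerivAt (fun r : ℝ => s + r) 1 0 := by
      simpa using (hasDerivAt_id (0 : ℝ)).const_add s
    have hDts' : HasDerivAt (fun y => σ t y) (fderiv ℝ F (t, s) (0, 1))
        ((fun r : ℝ => s + r) 0) := by simpa using hDts
    have hB2 : HasDerivAt (fun r => σ t (s + r)) (fderiv ℝ F (t, s) (0, 1)) 0 := by
      have := hDts'.comp 0 hadd; rw [mul_one] at this; exact this
    have hB : HasDerivAt (fun r => σ s r + σ t (s + r) - σ t s)
        (g s + fderiv ℝ F (t, s) (0, 1)) 0 := (hB1.add hB2).sub_const (σ t s)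
    have hA' : HasDerivAt (fun r => σ (t + s) r) (g s + fderiv ℝ F (t, s) (0, 1)) 0 :=
      hB.congr_of_eventuallyEq hev
    have heq : g (t + s) = g s + fderiv ℝ F (t, s) (0, 1) := hA.unique hA'
    have : fderiv ℝ F (t, s) (0, 1) = g (t + s) - g s := by linarith
    exact this ▸ hDts
  -- integrability of g on subintervals of N
  have hint : ∀ c ∈ N, ∀ d ∈ N, IntervalIntegrable g volume c d := by
    intro c hc d hd
    exact (hgcont.mono (Set.ordConnected_Ioo.uIcc_subset hc hd)).intervalIntegrable
  set φ : ℝ → ℝ := fun x => ∫ u in (0 : ℝ)..x, g u with hφ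
  have hφderiv : ∀ x ∈ N, HasDerivAt φ (g x) x := by
    intro x hx
    exact integral_hasDerivAt_right (hint 0 h0N x hx)
      (hgcont.stronglyMeasurableAtFilter hNopen x hx)
      (hgcont.continuousAt (hNopen.mem_nhds hx))
  refine ⟨φ, fun x hx => ((hφderiv x hx).differentiableAt.continuousAt).continuousWithinAt,
    by simp [hφ], ?_⟩
  intro u hu v hv
  have huN := hN'sub hu
  have hvN := hN'sub hv
  have huvN : u + v ∈ N := hN'add u hu v hv
  have hsub1 : Set.uIcc (0 : ℝ) v ⊆ N' := Set.ordConnected_Ioo.uIcc_subset h0N' hv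
  have hderivs : ∀ x ∈ Set.uIcc (0 : ℝ) v, HasDerivAt (fun y => σ u y) (g (u + x) - g x) x :=
    fun x hx => key u hu x (hsub1 hx)
  have hc1 : ContinuousOn (fun x => g (u + x)) (Set.uIcc (0 : ℝ) v) := by
    apply hgcont.comp (continuous_const.add continuous_id).continuousOn
    intro x hx
    exact hN'add u hu x (hsub1 hx)
  have hc2 : ContinuousOn g (Set.uIcc (0 : ℝ) v) :=
    hgcont.mono (fun x hx => hN'sub (hsub1 hx))
  have h1 : IntervalIntegrable (fun x => g (u + x)) volume 0 v := hc1.intervalIntegrable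
  have h2 : IntervalIntegrable g volume 0 v := hc2.intervalIntegrable
  have hintegr : IntervalIntegrable (fun x => g (u + x) - g x) volume 0 v := h1.sub h2
  have hFTC := integral_eq_sub_of_hasDerivAt hderivs hintegr
  have hsplit : (∫ x in (0 : ℝ)..v, (g (u + x) - g x)) =
      (∫ x in (0 : ℝ)..v, g (u + x)) - ∫ x in (0 : ℝ)..v, g x :=
    integral_sub h1 h2
  have htrans : (∫ x in (0 : ℝ)..v, g (u + x)) = ∫ x in u..(u + v), g x := by
    rw [integral_comp_add_left g u, add_zero]
  have hadj : (∫ x in (0 : ℝ)..u, g x) + (∫ x in u..(u + v), g x) =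
      ∫ x in (0 : ℝ)..(u + v), g x :=
    integral_add_adjacent_intervals (hint 0 h0N u huN) (hint u huN (u + v) huvN)
  have hσu0 : σ u 0 = 0 := (hσ.1 u huN).1
  simp only [hφ]
  rw [hσu0, sub_zero] at hFTC
  rw [hsplit, htrans] at hFTC
  rw [← hFTC]
  linarith [hadj]
end

section
/- Every continuous local additive multiplier σ on an open interval N ∋ 0 that is bounded is cohomologous, on a possibly smaller interval, to a smooth one: there exist an open interval N' ∋ 0, a smooth local additive multiplier ζ on N', and a continuous function φ: N' + N' → ℝ with φ(0) = 0, such that ζ(t,s) = σ(t,s) − φ(t+s) + φ(t) + φ(s) for all t, s ∈ N'. -/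
open scoped Pointwise

open MeasureTheory Metric Set

set_option maxHeartbeats 1000000 in
/-- Every continuous bounded local additive multiplier `σ` on an open
interval `N ∋ 0` is cohomologous, on a possibly smaller interval, to a smooth one: there
exist an open interval `N' ∋ 0`, a smooth local additive multiplier `ζ` on `N'`, and a
continuous `φ : N' + N' → ℝ` with `φ(0) = 0` such that
`ζ(t,s) = σ(t,s) − φ(t+s) + φ(t) + φ(s)` for `t, s ∈ N'`. -/
theorem stmt13 (N : Set ℝ) (hN : ∃ a b : ℝ, a < 0 ∧ 0 < b ∧ N = Set.Ioo a b)
    (σ : ℝ → ℝ → ℝ) (hσ : IsLocalAddMultiplier N σ)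
    (hσcont : ContinuousOn (fun p : ℝ × ℝ => σ p.1 p.2) (N ×ˢ N))
    (hσbdd : ∃ M : ℝ, ∀ t ∈ N, ∀ s ∈ N, |σ t s| ≤ M) :
    ∃ N' : Set ℝ, (∃ a b : ℝ, a < 0 ∧ 0 < b ∧ N' = Set.Ioo a b) ∧ N' ⊆ N ∧
      (∀ x ∈ N', ∀ y ∈ N', x + y ∈ N) ∧
      ∃ (ζ : ℝ → ℝ → ℝ) (φ : ℝ → ℝ), IsLocalAddMultiplier N' ζ ∧
        ContDiffOn ℝ (⊤ : ℕ∞) (fun p : ℝ × ℝ => ζ p.1 p.2) (N' ×ˢ N') ∧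
        ContinuousOn φ (N' + N') ∧ φ 0 = 0 ∧
        ∀ t ∈ N', ∀ s ∈ N', ζ t s = σ t s - φ (t + s) + φ t + φ s := by
  classical
  obtain ⟨a, b, ha, hb, rfl⟩ := hN
  obtain ⟨M₀, hM₀⟩ := hσbdd
  set M : ℝ := max M₀ 0 with hM
  have hM0 : (0:ℝ) ≤ M := le_max_right _ _
  have hMb : ∀ x ∈ Set.Ioo a b, ∀ y ∈ Set.Ioo a b, |σ x y| ≤ M :=
    fun x hx y hy => (hM₀ x hx y hy).trans (le_max_left _ _)
  set c : ℝ := min (-a) b with hc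
  have hc0 : (0:ℝ) < c := lt_min (neg_pos.2 ha) hb
  set ε : ℝ := c / 20 with hε
  have hε0 : (0:ℝ) < ε := by positivity
  have hεc : 20 * ε = c := by rw [hε]; ring
  have hmem : ∀ x : ℝ, |x| < c → x ∈ Set.Ioo a b := by
    intro x hx
    rw [abs_lt] at hx
    have h1 : c ≤ -a := min_le_left _ _
    have h2 : c ≤ b := min_le_right _ _
    exact ⟨by linarith [hx.1], by linarith [hx.2]⟩
  -- cutoff bump χb and mollifier bump ρ
  set χb : ContDiffBump (0:ℝ) := ⟨12 * ε, 15 * ε, by positivity, by linarith⟩ with hχdef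
  have hχrIn : χb.rIn = 12 * ε := by rw [hχdef]
  have hχrOut : χb.rOut = 15 * ε := by rw [hχdef]
  set ρb : ContDiffBump (ε/2) := ⟨ε/4, ε/2, by positivity, by linarith⟩ with hρbdef
  have hρbOut : ρb.rOut = ε/2 := by rw [hρbdef]
  set ρ : ℝ → ℝ := ρb.normed volume with hρdef
  have hρ_cont : Continuous ρ := ρb.continuous_normed
  have hρC1 : ContDiff ℝ 1 ρ := ρb.contDiff_normed (n := 1)
  have hρ'_cont : Continuous (deriv ρ) := hρC1.continuous_deriv le_rfl
  have hρ_diff : ∀ x : ℝ, HasDerivAt ρ (deriv ρ x) x :=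
    fun x => ((hρC1.differentiable one_ne_zero) x).hasDerivAt
  have hρ_cpt : HasCompactSupport ρ := ρb.hasCompactSupport_normed
  have hρ'_cpt : HasCompactSupport (deriv ρ) := hρ_cpt.deriv
  have hρ_int1 : (∫ v, ρ v) = 1 := ρb.integral_normed
  have hρ_integrable : Integrable ρ := ρb.integrable_normed
  have hρ_supp : ∀ v : ℝ, ρ v ≠ 0 → 0 < v ∧ v < ε := by
    intro v hv
    have h1 : v ∈ Function.support ρ := Function.mem_support.2 hv
    rw [hρdef, ContDiffBump.support_normed_eq, hρbOut, Real.ball_eq_Ioo] at h1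
    exact ⟨by linarith [h1.1], by linarith [h1.2]⟩
  -- the truncated cocycle τ
  set τ : ℝ × ℝ → ℝ := fun p =>
    if p ∈ Set.Ioo a b ×ˢ Set.Ioo a b then χb p.1 * χb p.2 * σ p.1 p.2 else 0 with hτdef
  have hτ_zero₁ : ∀ x y : ℝ, 15 * ε ≤ |x| → τ (x, y) = 0 := by
    intro x y hx
    have hχ : χb x = 0 := χb.zero_of_le_dist (by rw [hχrOut, Real.dist_0_eq_abs]; exact hx)
    simp only [hτdef]
    by_cases h : ((x, y) : ℝ × ℝ) ∈ Set.Ioo a b ×ˢ Set.Ioo a b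
    · rw [if_pos h]; simp [hχ]
    · rw [if_neg h]
  have hτ_zero₂ : ∀ x y : ℝ, 15 * ε ≤ |y| → τ (x, y) = 0 := by
    intro x y hy
    have hχ : χb y = 0 := χb.zero_of_le_dist (by rw [hχrOut, Real.dist_0_eq_abs]; exact hy)
    simp only [hτdef]
    by_cases h : ((x, y) : ℝ × ℝ) ∈ Set.Ioo a b ×ˢ Set.Ioo a b
    · rw [if_pos h]; simp [hχ]
    · rw [if_neg h]
  have hτ_bd : ∀ p : ℝ × ℝ, |τ p| ≤ M := by
    intro p
    simp only [hτdef]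
    by_cases h : p ∈ Set.Ioo a b ×ˢ Set.Ioo a b
    · rw [if_pos h]
      have h1 : |σ p.1 p.2| ≤ M := hMb p.1 h.1 p.2 h.2
      have c1 : |χb p.1| ≤ 1 := abs_le.2 ⟨by linarith [χb.nonneg' p.1], χb.le_one⟩
      have c2 : |χb p.2| ≤ 1 := abs_le.2 ⟨by linarith [χb.nonneg' p.2], χb.le_one⟩
      rw [abs_mul, abs_mul]
      have : |χb p.1| * |χb p.2| * |σ p.1 p.2| ≤ 1 * 1 * |σ p.1 p.2| := by
        gcongr <;> positivity
      nlinarith [abs_nonneg (σ p.1 p.2)]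
    · rw [if_neg h]; simpa using hM0
  have hτ_eq : ∀ x y : ℝ, |x| ≤ 12 * ε → |y| ≤ 12 * ε → τ (x, y) = σ x y := by
    intro x y hx hy
    have hx' : x ∈ Set.Ioo a b := hmem x (by linarith)
    have hy' : y ∈ Set.Ioo a b := hmem y (by linarith)
    have hcond : ((x, y) : ℝ × ℝ) ∈ Set.Ioo a b ×ˢ Set.Ioo a b := ⟨hx', hy'⟩
    simp only [hτdef]
    rw [if_pos hcond,
      χb.one_of_mem_closedBall (by rw [Metric.mem_closedBall, Real.dist_0_eq_abs, hχrIn]; exact hx),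
      χb.one_of_mem_closedBall (by rw [Metric.mem_closedBall, Real.dist_0_eq_abs, hχrIn]; exact hy),
      one_mul, one_mul]
  have hτ_cont : Continuous τ := by
    rw [continuous_iff_continuousAt]
    intro p
    by_cases hp : p ∈ Set.Ioo a b ×ˢ Set.Ioo a b
    · have hU : IsOpen ((Set.Ioo a b) ×ˢ (Set.Ioo a b)) := isOpen_Ioo.prod isOpen_Ioo
      have hg : ContinuousAt (fun q : ℝ × ℝ => χb q.1 * χb q.2 * σ q.1 q.2) p := by
        have h1 : ContinuousAt (fun q : ℝ × ℝ => σ q.1 q.2) p :=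
          hσcont.continuousAt (hU.mem_nhds hp)
        exact (((χb.continuous.comp continuous_fst).mul
          (χb.continuous.comp continuous_snd)).continuousAt).mul h1
      have hEq : τ =ᶠ[nhds p] fun q : ℝ × ℝ => χb q.1 * χb q.2 * σ q.1 q.2 := by
        filter_upwards [hU.mem_nhds hp] with q hq
        simp only [hτdef]
        rw [if_pos hq]
      exact (continuousAt_congr hEq).2 hg
    · have habs : ∀ x : ℝ, x ∉ Set.Ioo a b → 15 * ε < |x| := by
        intro x hx
        rw [Set.mem_Ioo, not_and_or] at hx
        rcases hx with h' | h'
        · have h1 : c ≤ -a := min_le_left _ _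
          have h2 := neg_abs_le x
          have : x ≤ a := le_of_not_gt h'
          linarith
        · have h1 : c ≤ b := min_le_right _ _
          have h2 := le_abs_self x
          have : b ≤ x := le_of_not_gt h'
          linarith
      have hout : 15 * ε < |p.1| ∨ 15 * ε < |p.2| := by
        by_cases h1 : p.1 ∈ Set.Ioo a b
        · by_cases h2 : p.2 ∈ Set.Ioo a b
          · exact absurd (Set.mem_prod.2 ⟨h1, h2⟩) hp
          · exact Or.inr (habs _ h2)
        · exact Or.inl (habs _ h1)
      have hV : IsOpen ({q : ℝ × ℝ | 15 * ε < |q.1|} ∪ {q : ℝ × ℝ | 15 * ε < |q.2|}) :=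
        (isOpen_lt continuous_const (continuous_abs.comp continuous_fst)).union
          (isOpen_lt continuous_const (continuous_abs.comp continuous_snd))
      have hpV : p ∈ ({q : ℝ × ℝ | 15 * ε < |q.1|} ∪ {q : ℝ × ℝ | 15 * ε < |q.2|}) := by
        rcases hout with h | h
        · exact Or.inl h
        · exact Or.inr h
      have hEq : τ =ᶠ[nhds p] fun _ => (0:ℝ) := by
        filter_upwards [hV.mem_nhds hpV] with q hq
        rcases hq with h | h
        · exact hτ_zero₁ q.1 q.2 (le_of_lt h)
        · exact hτ_zero₂ q.1 q.2 (le_of_lt h)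
      exact (continuousAt_congr hEq).2 continuousAt_const
  have hτv_cont : ∀ x : ℝ, Continuous fun v => τ (x, v) :=
    fun x => hτ_cont.comp (continuous_const.prodMk continuous_id)
  have hτv_cpt : ∀ x : ℝ, HasCompactSupport fun v => τ (x, v) := by
    intro x
    apply HasCompactSupport.intro (isCompact_closedBall (0:ℝ) (15 * ε))
    intro v hv
    apply hτ_zero₂
    rw [Metric.mem_closedBall, Real.dist_0_eq_abs] at hv
    exact le_of_lt (not_le.1 hv)
  have hIτ : ∀ x : ℝ, ∀ g : ℝ → ℝ, Continuous g → Integrable fun v => τ (x, v) * g v := by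
    intro x g hg
    exact ((hτv_cont x).mul hg).integrable_of_hasCompactSupport ((hτv_cpt x).mul_right)
  -- the mollified cocycle zt and the primitive constructions
  set zt : ℝ → ℝ → ℝ := fun t s => ∫ v, τ (t, v) * (ρ (v - s) - ρ v) with hztdef
  set φ₁ : ℝ → ℝ := fun x => -(∫ v, τ (x, v) * ρ v) with hφ₁def
  have hzt0 : ∀ u : ℝ, zt u 0 = 0 := by
    intro u
    simp only [hztdef]
    simp
  -- identity (A) : zt is cohomologous to σ via φ₁
  have hA : ∀ t s : ℝ, |t| < 4 * ε → |s| < 4 * ε →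
      zt t s = σ t s - φ₁ (t + s) + φ₁ t + φ₁ s := by
    intro t s ht hs
    have i2 : Integrable fun v => τ (t, v) * ρ (v - s) :=
      hIτ t _ (hρ_cont.comp (continuous_id.sub continuous_const))
    have i1 : ∀ x : ℝ, Integrable fun v => τ (x, v) * ρ v := fun x => hIτ x ρ hρ_cont
    have e1 : zt t s = (∫ v, τ (t, v) * ρ (v - s)) - ∫ v, τ (t, v) * ρ v := by
      simp only [hztdef]
      rw [← integral_sub i2 (i1 t)]
      congr 1; funext v; ring
    have e2 : (∫ v, τ (t, v) * ρ (v - s)) = ∫ v, τ (t, v + s) * ρ v := by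
      rw [← integral_add_right_eq_self (μ := volume) (fun v => τ (t, v) * ρ (v - s)) s]
      simp only [add_sub_cancel_right]
    have e3 : (fun v => τ (t, v + s) * ρ v)
        = fun v => (σ t s + τ (t + s, v) - τ (s, v)) * ρ v := by
      funext v
      by_cases hv : ρ v = 0
      · rw [hv, mul_zero, mul_zero]
      · obtain ⟨hv0, hvε⟩ := hρ_supp v hv
        have hvab : |v| < ε := abs_lt.2 ⟨by linarith, hvε⟩
        have hts : |t + s| ≤ |t| + |s| := abs_add_le t s
        have hsv : |s + v| ≤ |s| + |v| := abs_add_le s v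
        have htsv : |t + s + v| ≤ |t + s| + |v| := abs_add_le (t + s) v
        have hvs : |v + s| ≤ |v| + |s| := abs_add_le v s
        have r1 : τ (t, v + s) = σ t (v + s) :=
          hτ_eq _ _ (by linarith) (by linarith)
        have r2 : τ (t + s, v) = σ (t + s) v := hτ_eq _ _ (by linarith) (by linarith)
        have r3 : τ (s, v) = σ s v := hτ_eq _ _ (by linarith) (by linarith)
        have hco := hσ.2 t (hmem t (by linarith)) s (hmem s (by linarith)) v
          (hmem v (by linarith)) (hmem _ (by linarith)) (hmem _ (by linarith))
          (hmem _ (by linarith))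
        rw [r1, r2, r3, add_comm v s]
        have : σ t (s + v) = σ t s + σ (t + s) v - σ s v := by linarith
        rw [this]
    have e4 : (∫ v, (σ t s + τ (t + s, v) - τ (s, v)) * ρ v)
        = σ t s + (∫ v, τ (t + s, v) * ρ v) - ∫ v, τ (s, v) * ρ v := by
      have hfun : (fun v => (σ t s + τ (t + s, v) - τ (s, v)) * ρ v)
          = fun v => (σ t s * ρ v + τ (t + s, v) * ρ v) - τ (s, v) * ρ v := by
        funext v; ring
      have iadd : Integrable (fun v => σ t s * ρ v + τ (t + s, v) * ρ v) :=
        (hρ_integrable.const_mul (σ t s)).add (i1 (t + s))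
      rw [hfun, integral_sub iadd (i1 s),
        integral_add (hρ_integrable.const_mul (σ t s)) (i1 (t + s)),
        integral_const_mul (σ t s) ρ, hρ_int1, mul_one]
    rw [e1, e2, e3, e4]
    simp only [hφ₁def]
    ring
  -- cocycle identity for zt
  have hcoc : ∀ x y z : ℝ, |x| < ε → |y| < ε → |z| < ε →
      zt x y + zt (x + y) z = zt y z + zt x (y + z) := by
    intro x y z hx hy hz
    have hxy : |x + y| ≤ |x| + |y| := abs_add_le x y
    have hyz : |y + z| ≤ |y| + |z| := abs_add_le y z
    have hxyz : |x + y + z| ≤ |x + y| + |z| := abs_add_le (x + y) z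
    have h1 := hA x y (by linarith) (by linarith)
    have h2 := hA (x + y) z (by linarith) (by linarith)
    have h3 := hA y z (by linarith) (by linarith)
    have h4 := hA x (y + z) (by linarith) (by linarith)
    have hco := hσ.2 x (hmem x (by linarith)) y (hmem y (by linarith)) z
      (hmem z (by linarith)) (hmem _ (by linarith)) (hmem _ (by linarith))
      (hmem _ (by linarith))
    have hassoc : x + (y + z) = x + y + z := by ring
    rw [hassoc] at h4
    rw [h1, h2, h3, h4]
    linarith
  -- derivative machinery
  obtain ⟨v₀, hv₀⟩ := (hρ'_cont.abs).exists_forall_ge_of_hasCompactSupport hρ'_cpt.abs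
  set C1 : ℝ := |deriv ρ v₀| with hC1def
  have hC1 : ∀ y : ℝ, |deriv ρ y| ≤ C1 := hv₀
  have hC10 : (0:ℝ) ≤ C1 := abs_nonneg _
  set bnd : ℝ → ℝ := (Metric.closedBall (0:ℝ) (15 * ε)).indicator (fun _ => M * C1) with hbnddef
  have hbnd_int : Integrable bnd := by
    rw [hbnddef]
    rw [integrable_indicator_iff measurableSet_closedBall]
    exact integrableOn_const (isCompact_closedBall _ _).measure_lt_top.ne
  have hW : ∀ u y₀ : ℝ, HasDerivAt (fun y => zt u y)
      (∫ v, τ (u, v) * -(deriv ρ (v - y₀))) y₀ := by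
    intro u y₀
    have H := hasDerivAt_integral_of_dominated_loc_of_deriv_le (μ := volume) (x₀ := y₀)
      (F := fun y v => τ (u, v) * (ρ (v - y) - ρ v))
      (F' := fun y v => τ (u, v) * -(deriv ρ (v - y))) (bound := bnd) (s := Metric.ball y₀ 1) (Metric.ball_mem_nhds y₀ one_pos)
      (Filter.Eventually.of_forall fun y =>
        (((hτv_cont u).mul ((hρ_cont.comp (continuous_id.sub continuous_const)).sub
          hρ_cont))).aestronglyMeasurable)
      (hIτ u _ ((hρ_cont.comp (continuous_id.sub continuous_const)).sub hρ_cont))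
      (((hτv_cont u).mul ((hρ'_cont.comp (continuous_id.sub
        continuous_const)).neg)).aestronglyMeasurable)
      ?_ hbnd_int ?_
    · exact H.2
    · refine Filter.Eventually.of_forall fun v => fun y _ => ?_
      beta_reduce
      by_cases hv : v ∈ Metric.closedBall (0:ℝ) (15 * ε)
      · rw [hbnddef, Set.indicator_of_mem hv]
        rw [Real.norm_eq_abs, abs_mul, abs_neg]
        exact mul_le_mul (hτ_bd _) (hC1 _) (abs_nonneg _) hM0
      · have : τ (u, v) = 0 := by
          apply hτ_zero₂
          rw [Metric.mem_closedBall, Real.dist_0_eq_abs] at hv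
          exact le_of_lt (not_le.1 hv)
        rw [hbnddef, Set.indicator_of_notMem hv, this]
        simp
    · refine Filter.Eventually.of_forall fun v => fun y _ => ?_
      beta_reduce
      have h1 : HasDerivAt (fun y => ρ (v - y)) (-(deriv ρ (v - y))) y := by
        have h0 : HasDerivAt (fun y : ℝ => v - y) (-1) y := (hasDerivAt_id y).const_sub v
        have := (hρ_diff (v - y)).comp y h0
        rw [mul_neg_one] at this; exact this
      exact ((h1.sub_const (ρ v)).const_mul (τ (u, v)))
  set ψ : ℝ → ℝ := fun u => ∫ v, τ (u, v) * -(deriv ρ v) with hψdef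
  have hψ0 : ∀ u : ℝ, HasDerivAt (fun y => zt u y) (ψ u) 0 := by
    intro u
    have := hW u 0
    simpa only [sub_zero, hψdef] using this
  have hψ_cont : Continuous ψ := by
    rw [hψdef]
    apply continuous_of_dominated (bound := fun v => M * |deriv ρ v|)
      (fun u => ((hτv_cont u).mul hρ'_cont.neg).aestronglyMeasurable)
    · intro u
      refine Filter.Eventually.of_forall fun v => ?_
      rw [Real.norm_eq_abs, Pi.mul_apply, Pi.neg_apply, abs_mul, abs_neg]
      exact mul_le_mul_of_nonneg_right (hτ_bd _) (abs_nonneg _)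
    · exact ((hρ'_cont.abs).integrable_of_hasCompactSupport hρ'_cpt.abs).const_mul M
    · refine Filter.Eventually.of_forall fun v => ?_
      exact (hτ_cont.comp (continuous_id.prodMk continuous_const)).mul continuous_const
  set Φ : ℝ → ℝ := fun x => ∫ u in (0:ℝ)..x, ψ u with hΦdef
  have hΦd : ∀ x : ℝ, HasDerivAt Φ (ψ x) x := by
    intro x
    rw [hΦdef]
    exact (hψ_cont.integral_hasStrictDerivAt 0 x).hasDerivAt
  have hΦ_cont : Continuous Φ := by
    rw [continuous_iff_continuousAt]
    exact fun x => (hΦd x).continuousAt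
  have hΦ0 : Φ 0 = 0 := by rw [hΦdef]; exact intervalIntegral.integral_same
  -- identification of the slice derivative with ψ-differences
  have hder : ∀ x y : ℝ, |x| < ε / 2 → |y| < ε / 2 →
      HasDerivAt (fun s' => zt x s') (ψ (x + y) - ψ y) y := by
    intro x y hx hy
    have hxy : |x + y| ≤ |x| + |y| := abs_add_le x y
    have g1 : HasDerivAt (fun r => zt (x + y) r - zt y r) (ψ (x + y) - ψ y) 0 :=
      (hψ0 (x + y)).sub (hψ0 y)
    have hEq : (fun r => zt x (y + r) - zt x y) =ᶠ[nhds 0]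
        fun r => zt (x + y) r - zt y r := by
      have hnh : Set.Ioo (-(ε / 2)) (ε / 2) ∈ nhds (0:ℝ) :=
        Ioo_mem_nhds (by linarith) (by linarith)
      filter_upwards [hnh] with r hr
      have hr' : |r| < ε := by
        rw [abs_lt]; exact ⟨by linarith [hr.1], by linarith [hr.2]⟩
      have := hcoc x y r (by linarith) (by linarith) hr'
      linarith
    have g2 : HasDerivAt (fun r => zt x (y + r) - zt x y) (ψ (x + y) - ψ y) 0 :=
      g1.congr_of_eventuallyEq hEq
    have hinner : HasDerivAt (fun r : ℝ => y + r) 1 0 := by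
      simpa using (hasDerivAt_id (0:ℝ)).const_add y
    have houter : HasDerivAt (fun s' => zt x s')
        (∫ v, τ (x, v) * -(deriv ρ (v - y))) (y + 0) := by
      rw [add_zero]; exact hW x y
    have h3 : HasDerivAt (fun r => zt x (y + r))
        ((∫ v, τ (x, v) * -(deriv ρ (v - y))) * 1) 0 :=
      HasDerivAt.comp 0 houter hinner
    have h4 : HasDerivAt (fun r => zt x (y + r) - zt x y)
        ((∫ v, τ (x, v) * -(deriv ρ (v - y))) * 1) 0 := h3.sub_const _
    have h5 : (∫ v, τ (x, v) * -(deriv ρ (v - y))) * 1 = ψ (x + y) - ψ y :=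
      h4.unique g2
    have h6 : (∫ v, τ (x, v) * -(deriv ρ (v - y))) = ψ (x + y) - ψ y := by
      rw [← h5]; ring
    rw [← h6]
    exact hW x y
  -- zt is the coboundary of Φ
  have hΦeq : ∀ t s : ℝ, |t| < ε / 2 → |s| < ε / 2 →
      zt t s = Φ (t + s) - Φ t - Φ s := by
    intro t s ht hs
    have hkder : ∀ y ∈ Set.Ioo (-(ε / 2)) (ε / 2),
        HasDerivAt (fun y => zt t y - (Φ (t + y) - Φ t - Φ y)) 0 y := by
      intro y hy
      have hy' : |y| < ε / 2 := abs_lt.2 ⟨by linarith [hy.1], hy.2⟩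
      have h1 := hder t y ht hy'
      have h2 : HasDerivAt (fun y => Φ (t + y)) (ψ (t + y) * 1) y :=
        HasDerivAt.comp y (hΦd (t + y)) ((hasDerivAt_id y).const_add t)
      have h3 : HasDerivAt (fun y => Φ (t + y) - Φ t - Φ y) (ψ (t + y) * 1 - ψ y) y :=
        (h2.sub_const (Φ t)).sub (hΦd y)
      have h4 := h1.sub h3
      have : ψ (t + y) - ψ y - (ψ (t + y) * 1 - ψ y) = 0 := by ring
      rwa [this] at h4
    have hconv : Convex ℝ (Set.Ioo (-(ε / 2)) (ε / 2)) := convex_Ioo _ _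
    have hdiff : DifferentiableOn ℝ (fun y => zt t y - (Φ (t + y) - Φ t - Φ y))
        (Set.Ioo (-(ε / 2)) (ε / 2)) :=
      fun y hy => ((hkder y hy).differentiableAt).differentiableWithinAt
    have hfd : ∀ y ∈ Set.Ioo (-(ε / 2)) (ε / 2),
        fderivWithin ℝ (fun y => zt t y - (Φ (t + y) - Φ t - Φ y))
          (Set.Ioo (-(ε / 2)) (ε / 2)) y = 0 := by
      intro y hy
      rw [fderivWithin_of_isOpen isOpen_Ioo hy]
      have h5 := hasDerivAt_iff_hasFDerivAt.1 (hkder y hy)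
      have h6 : ContinuousLinearMap.toSpanSingleton ℝ (0:ℝ) = 0 := by
        ext; simp
      rw [h6] at h5
      exact h5.fderiv
    have hs0 : (0:ℝ) ∈ Set.Ioo (-(ε / 2)) (ε / 2) := by
      constructor <;> [linarith; linarith]
    have hss : s ∈ Set.Ioo (-(ε / 2)) (ε / 2) := by
      rw [abs_lt] at hs; exact ⟨hs.1, hs.2⟩
    have hconst := hconv.is_const_of_fderivWithin_eq_zero hdiff hfd hss hs0
    have hval0 : zt t 0 - (Φ (t + 0) - Φ t - Φ 0) = 0 := by
      rw [hzt0 t, add_zero, hΦ0]; ring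
    rw [hval0] at hconst
    linarith [hconst]
  -- continuity of φ₁
  have hφ₁cont : Continuous φ₁ := by
    rw [hφ₁def]
    apply Continuous.neg
    apply continuous_of_dominated (bound := fun v => M * |ρ v|)
      (fun x => ((hτv_cont x).mul hρ_cont).aestronglyMeasurable)
    · intro x
      refine Filter.Eventually.of_forall fun v => ?_
      rw [Real.norm_eq_abs, Pi.mul_apply, abs_mul]
      exact mul_le_mul_of_nonneg_right (hτ_bd _) (abs_nonneg _)
    · exact ((hρ_cont.abs).integrable_of_hasCompactSupport hρ_cpt.abs).const_mul M
    · refine Filter.Eventually.of_forall fun v => ?_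
      exact (hτ_cont.comp (continuous_id.prodMk continuous_const)).mul continuous_const
  have hφ₁0 : φ₁ 0 = 0 := by
    have hτ0 : ∀ v : ℝ, τ (0, v) = 0 := by
      intro v
      simp only [hτdef]
      by_cases h : ((0:ℝ), v) ∈ Set.Ioo a b ×ˢ Set.Ioo a b
      · rw [if_pos h, (hσ.1 v h.2).2, mul_zero]
      · rw [if_neg h]
    rw [hφ₁def]
    simp [hτ0]
  -- final assembly
  refine ⟨Set.Ioo (-(ε/4)) (ε/4), ⟨-(ε/4), ε/4, by linarith, by linarith, rfl⟩, ?_, ?_,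
    (fun _ _ => 0), (fun x => φ₁ x + Φ x), ?_, ?_, ?_, ?_, ?_⟩
  · intro x hx
    exact hmem x (by rw [abs_lt]; exact ⟨by linarith [hx.1], by linarith [hx.2]⟩)
  · intro x hx y hy
    apply hmem
    have := abs_add_le x y
    have hx' : |x| < ε/4 := abs_lt.2 ⟨by linarith [hx.1], hx.2⟩
    have hy' : |y| < ε/4 := abs_lt.2 ⟨by linarith [hy.1], hy.2⟩
    linarith
  · exact ⟨fun t _ => ⟨rfl, rfl⟩, fun _ _ _ _ _ _ _ _ _ => by ring⟩
  · exact contDiffOn_const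
  · exact (hφ₁cont.add hΦ_cont).continuousOn
  · show φ₁ 0 + Φ 0 = 0
    rw [hφ₁0, hΦ0]; ring
  · intro t ht s hs
    obtain ⟨ht1, ht2⟩ := ht
    obtain ⟨hs1, hs2⟩ := hs
    have ht' : |t| < ε/4 := abs_lt.2 ⟨by linarith, ht2⟩
    have hs' : |s| < ε/4 := abs_lt.2 ⟨by linarith, hs2⟩
    have h1 := hA t s (by linarith) (by linarith)
    have h2 := hΦeq t s (by linarith) (by linarith)
    show (0:ℝ) = σ t s - (φ₁ (t + s) + Φ (t + s)) + (φ₁ t + Φ t) + (φ₁ s + Φ s)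
    linarith [h1, h2]
end

section
/- Every continuous bounded local additive multiplier on an open interval N containing 0 is trivial on a smaller interval: there exist an open interval N' ⊆ N containing 0 and a continuous φ: N → ℝ with φ(0) = 0 such that σ(t,s) = φ(t+s) − φ(t) − φ(s) for all t, s ∈ N'. -/
/-- Every continuous bounded local additive multiplier on an open
interval `N ∋ 0` is trivial on a smaller interval: there exist an open interval
`N' ⊆ N` containing `0` and a continuous `φ : N → ℝ` with `φ(0) = 0` such that
`σ(t,s) = φ(t+s) − φ(t) − φ(s)` for all `t, s ∈ N'`. -/
theorem stmt14 (N : Set ℝ) (hN : ∃ a b : ℝ, a < 0 ∧ 0 < b ∧ N = Set.Ioo a b)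
    (σ : ℝ → ℝ → ℝ) (hσ : IsLocalAddMultiplier N σ)
    (hσcont : ContinuousOn (fun p : ℝ × ℝ => σ p.1 p.2) (N ×ˢ N))
    (hσbdd : ∃ M : ℝ, ∀ t ∈ N, ∀ s ∈ N, |σ t s| ≤ M) :
    ∃ N' : Set ℝ, (∃ a b : ℝ, a < 0 ∧ 0 < b ∧ N' = Set.Ioo a b) ∧ N' ⊆ N ∧
      (∀ x ∈ N', ∀ y ∈ N', x + y ∈ N) ∧
      ∃ φ : ℝ → ℝ, ContinuousOn φ N ∧ φ 0 = 0 ∧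
        ∀ t ∈ N', ∀ s ∈ N', σ t s = φ (t + s) - φ t - φ s := by
  obtain ⟨a, b, ha, hb, rfl⟩ := hN
  set δ : ℝ := min b (-a) / 8 with hδdef
  have hδ : 0 < δ := by
    have h1 : 0 < min b (-a) := lt_min hb (by linarith)
    positivity
  have hδb : δ ≤ b / 8 := by
    have := min_le_left b (-a); rw [hδdef]; linarith
  have hδa : δ ≤ -a / 8 := by
    have := min_le_right b (-a); rw [hδdef]; linarith
  -- the clamp to [-4δ, 4δ]
  set cl : ℝ → ℝ := fun x => max (-(4 * δ)) (min x (4 * δ)) with hcl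
  have hclmem : ∀ x, -(4 * δ) ≤ cl x ∧ cl x ≤ 4 * δ := by
    intro x
    refine ⟨le_max_left _ _, max_le (by linarith) (min_le_right _ _)⟩
  have hKmem : ∀ x : ℝ, -(4 * δ) ≤ x → x ≤ 4 * δ → x ∈ Set.Ioo a b := by
    intro x h1 h2
    constructor <;> [skip; skip] <;> nlinarith
  have hcl_id : ∀ x : ℝ, -(4 * δ) ≤ x → x ≤ 4 * δ → cl x = x := by
    intro x h1 h2
    rw [hcl]
    simp only [min_eq_left h2, max_eq_right h1]
  have hclcont : Continuous cl := by
    exact continuous_const.max (continuous_id.min continuous_const)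
  set τ : ℝ → ℝ → ℝ := fun x y => σ (cl x) (cl y) with hτ
  have hτc : Continuous fun p : ℝ × ℝ => τ p.1 p.2 := by
    have : (fun p : ℝ × ℝ => τ p.1 p.2) =
        (fun p : ℝ × ℝ => σ p.1 p.2) ∘ fun p : ℝ × ℝ => (cl p.1, cl p.2) := rfl
    rw [this]
    refine hσcont.comp_continuous ?_ ?_
    · exact (hclcont.comp continuous_fst).prodMk (hclcont.comp continuous_snd)
    · intro p
      exact ⟨hKmem _ (hclmem p.1).1 (hclmem p.1).2, hKmem _ (hclmem p.2).1 (hclmem p.2).2⟩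
  have hτeq : ∀ x y : ℝ, -(4 * δ) ≤ x → x ≤ 4 * δ → -(4 * δ) ≤ y → y ≤ 4 * δ →
      τ x y = σ x y := by
    intro x y hx1 hx2 hy1 hy2
    rw [hτ]; simp only; rw [hcl_id x hx1 hx2, hcl_id y hy1 hy2]
  -- cocycle identity for τ in the small region
  have hcoc : ∀ x y z : ℝ, -δ ≤ x → x ≤ δ → -δ ≤ y → y ≤ δ → -δ ≤ z → z ≤ δ →
      τ x y + τ (x + y) z = τ y z + τ x (y + z) := by
    intro x y z hx1 hx2 hy1 hy2 hz1 hz2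
    rw [hτeq x y (by linarith) (by linarith) (by linarith) (by linarith),
        hτeq (x + y) z (by linarith) (by linarith) (by linarith) (by linarith),
        hτeq y z (by linarith) (by linarith) (by linarith) (by linarith),
        hτeq x (y + z) (by linarith) (by linarith) (by linarith) (by linarith)]
    exact hσ.2 x (hKmem x (by linarith) (by linarith)) y (hKmem y (by linarith) (by linarith))
      z (hKmem z (by linarith) (by linarith)) (hKmem _ (by linarith) (by linarith))
      (hKmem _ (by linarith) (by linarith)) (hKmem _ (by linarith) (by linarith))
  -- the building blocks of φ
  set g : ℝ → ℝ := fun v => τ v δ with hg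
  have hgc : Continuous g := hτc.comp (continuous_id.prodMk continuous_const)
  set Ψ : ℝ → ℝ := fun x => ∫ v in (0:ℝ)..x, g v with hΨ
  set F : ℝ → ℝ := fun x => ∫ r in (0:ℝ)..δ, τ x r with hF
  have hΨc : Continuous Ψ :=
    intervalIntegral.continuous_primitive (fun c d => (hgc.intervalIntegrable c d)) 0
  have hFc : Continuous F := by
    have : Continuous (Function.uncurry τ) := hτc
    exact intervalIntegral.continuous_parametric_intervalIntegral_of_continuous' this 0 δ
  set φ : ℝ → ℝ := fun x => (Ψ x - F x) / δ with hφ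
  have hφc : Continuous φ := ((hΨc.sub hFc).div_const δ)
  refine ⟨Set.Ioo (-δ) δ, ⟨-δ, δ, by linarith, hδ, rfl⟩, ?_, ?_, φ, hφc.continuousOn, ?_, ?_⟩
  · intro x hx
    exact hKmem x (by rcases hx with ⟨h1, h2⟩; linarith) (by rcases hx with ⟨h1, h2⟩; linarith)
  · intro x hx y hy
    rcases hx with ⟨hx1, hx2⟩; rcases hy with ⟨hy1, hy2⟩
    exact hKmem _ (by linarith) (by linarith)
  · -- φ 0 = 0
    have hΨ0 : Ψ 0 = 0 := intervalIntegral.integral_same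
    have hF0 : F 0 = 0 := by
      rw [hF]
      simp only
      have : ∀ r : ℝ, τ 0 r = 0 := by
        intro r
        have h0 : cl (0:ℝ) = 0 := hcl_id 0 (by linarith) (by linarith)
        rw [hτ]; simp only; rw [h0]
        exact (hσ.1 (cl r) (hKmem _ (hclmem r).1 (hclmem r).2)).2
      simp [this]
    rw [hφ]; simp only; rw [hΨ0, hF0]; simp
  · -- main identity
    intro t ht s hs
    rcases ht with ⟨ht1, ht2⟩; rcases hs with ⟨hs1, hs2⟩
    set h : ℝ → ℝ := fun u => τ t u with hh
    have hhc : Continuous h := hτc.comp (continuous_const.prodMk continuous_id)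
    have hgt : Continuous fun u => g (t + u) := hgc.comp (continuous_const.add continuous_id)
    set P : ℝ → ℝ := fun x => ∫ u in (0:ℝ)..x, h u with hP
    -- Step 1 : ∫₀^δ τ t (s+r) dr = δ * τ t s + F (t+s) - F s
    have step1 : (∫ r in (0:ℝ)..δ, τ t (s + r)) = δ * τ t s + F (t + s) - F s := by
      have hEq : Set.EqOn (fun r => τ t (s + r))
          (fun r => τ t s + τ (t + s) r - τ s r) (Set.uIcc 0 δ) := by
        intro r hr
        rw [Set.uIcc_of_le hδ.le] at hr
        rcases hr with ⟨hr1, hr2⟩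
        have := hcoc t s r (by linarith) (by linarith) (by linarith) (by linarith)
          (by linarith) (by linarith)
        simp only
        linarith
      rw [intervalIntegral.integral_congr hEq]
      have i1 : IntervalIntegrable (fun r => τ t s + τ (t + s) r) MeasureTheory.volume 0 δ :=
        (continuous_const.add (hτc.comp (continuous_const.prodMk continuous_id))).intervalIntegrable _ _
      have i2 : IntervalIntegrable (fun r => τ s r) MeasureTheory.volume 0 δ :=
        (hτc.comp (continuous_const.prodMk continuous_id)).intervalIntegrable _ _
      rw [intervalIntegral.integral_sub i1 i2]
      have i3 : IntervalIntegrable (fun _ : ℝ => τ t s) MeasureTheory.volume 0 δ :=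
        intervalIntegrable_const
      have i4 : IntervalIntegrable (fun r => τ (t + s) r) MeasureTheory.volume 0 δ :=
        (hτc.comp (continuous_const.prodMk continuous_id)).intervalIntegrable _ _
      rw [intervalIntegral.integral_add i3 i4]
      rw [intervalIntegral.integral_const]
      rw [hF]
      simp [smul_eq_mul]
    -- Step 2 : ∫₀^δ τ t (s+r) dr = P (s+δ) - P s
    have step2 : (∫ r in (0:ℝ)..δ, τ t (s + r)) = P (s + δ) - P s := by
      have e1 : (∫ r in (0:ℝ)..δ, h (s + r)) = ∫ u in (s + 0)..(s + δ), h u :=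
        intervalIntegral.integral_comp_add_left h s
      rw [hP]
      simp only
      rw [show (∫ r in (0:ℝ)..δ, τ t (s + r)) = ∫ r in (0:ℝ)..δ, h (s + r) from rfl, e1,
        add_zero]
      rw [← intervalIntegral.integral_interval_sub_left
        (hhc.intervalIntegrable 0 (s + δ)) (hhc.intervalIntegrable 0 s)]
    -- Step 3 : ∫₀^s (h (u+δ) - h u) du = P (s+δ) - P δ - P s
    have step3 : (∫ u in (0:ℝ)..s, (h (u + δ) - h u)) = P (s + δ) - P δ - P s := by
      have i1 : IntervalIntegrable (fun u => h (u + δ)) MeasureTheory.volume 0 s :=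
        (hhc.comp (continuous_id.add continuous_const)).intervalIntegrable _ _
      have i2 : IntervalIntegrable h MeasureTheory.volume 0 s := hhc.intervalIntegrable _ _
      rw [intervalIntegral.integral_sub i1 i2]
      have e1 : (∫ u in (0:ℝ)..s, h (u + δ)) = ∫ u in (0 + δ)..(s + δ), h u :=
        intervalIntegral.integral_comp_add_right h δ
      rw [e1, zero_add]
      have e2 : (∫ u in δ..(s + δ), h u) = P (s + δ) - P δ := by
        rw [hP]
        simp only
        rw [← intervalIntegral.integral_interval_sub_left
          (hhc.intervalIntegrable 0 (s + δ)) (hhc.intervalIntegrable 0 δ)]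
      rw [e2, hP]
    -- Step 4 : pointwise, h (u+δ) - h u = g (t+u) - g u on uIcc 0 s
    have step4 : (∫ u in (0:ℝ)..s, (h (u + δ) - h u)) =
        ∫ u in (0:ℝ)..s, (g (t + u) - g u) := by
      apply intervalIntegral.integral_congr
      intro u hu
      have hub : -δ ≤ u ∧ u ≤ δ := by
        rcases Set.mem_uIcc.mp hu with ⟨h1, h2⟩ | ⟨h1, h2⟩ <;> constructor <;> linarith
      have := hcoc t u δ (by linarith) (by linarith) hub.1 hub.2 (by linarith) le_rfl
      simp only [hh, hg]
      linarith
    -- Step 5 : ∫₀^s (g (t+u) - g u) du = Ψ (t+s) - Ψ t - Ψ s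
    have step5 : (∫ u in (0:ℝ)..s, (g (t + u) - g u)) = Ψ (t + s) - Ψ t - Ψ s := by
      have i1 : IntervalIntegrable (fun u => g (t + u)) MeasureTheory.volume 0 s :=
        hgt.intervalIntegrable _ _
      have i2 : IntervalIntegrable g MeasureTheory.volume 0 s := hgc.intervalIntegrable _ _
      rw [intervalIntegral.integral_sub i1 i2]
      have e1 : (∫ u in (0:ℝ)..s, g (t + u)) = ∫ v in (t + 0)..(t + s), g v :=
        intervalIntegral.integral_comp_add_left g t
      rw [e1, add_zero]
      have e2 : (∫ v in t..(t + s), g v) = Ψ (t + s) - Ψ t := by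
        rw [hΨ]
        simp only
        rw [← intervalIntegral.integral_interval_sub_left
          (hgc.intervalIntegrable 0 (t + s)) (hgc.intervalIntegrable 0 t)]
      rw [e2, hΨ]
    -- P δ = F t
    have hPδ : P δ = F t := rfl
    -- combine
    have key : δ * τ t s = Ψ (t + s) - Ψ t - Ψ s - F (t + s) + F s + F t := by
      have c1 : δ * τ t s + F (t + s) - F s = P (s + δ) - P s := by
        rw [← step1, step2]
      have c2 : P (s + δ) - P δ - P s = Ψ (t + s) - Ψ t - Ψ s := by
        rw [← step3, step4, step5]
      rw [hPδ] at c2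
      linarith
    have hτts : τ t s = σ t s :=
      hτeq t s (by linarith) (by linarith) (by linarith) (by linarith)
    rw [hτts] at key
    rw [hφ]
    simp only
    field_simp
    linarith
end
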